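/- Let f : ℝ^d → ℝ be nonnegative and integrable. Suppose (Λⁿ) is a sequence of packing sets for f at level 1 (i.e., for each n, ∑_{λ∈Λⁿ} f(x−λ) ≤ 1 almost everywhere), and Λⁿ converges weakly to a set Λ (with a common separation constant δ > 0). Then Λ is a packing set: ∑_{λ∈Λ} f(x−λ) ≤ 1 almost everywhere. -/

import Mathlib

open MeasureTheory Filter Pointwise

noncomputable section

/-- The closed cube `[-R/2, R/2]^d`. -/
def cube (d : ℕ) (R : ℝ) : Set (Fin d → ℝ) := {y | ∀ i, |y i| ≤ R / 2}

/-- The open cube `(-ε/2, ε/2)^d`. -/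
def ocube (d : ℕ) (ε : ℝ) : Set (Fin d → ℝ) := {y | ∀ i, |y i| < ε / 2}

/-- `f + Λ` is a packing at level 1: `∑_{λ ∈ Λ} f(x - λ) ≤ 1` a.e. -/
def IsPacking {d : ℕ} (f : (Fin d → ℝ) → ℝ) (Λ : Set (Fin d → ℝ)) : Prop :=
  ∀ᵐ x : Fin d → ℝ, (∑' l : Λ, f (x - (l : Fin d → ℝ))) ≤ 1

/-- `Λ` is uniformly discrete with separation constant `δ`: distinct points are at
distance greater than `δ`. -/
def Separated {d : ℕ} (δ : ℝ) (Λ : Set (Fin d → ℝ)) : Prop :=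
  ∀ a ∈ Λ, ∀ b ∈ Λ, a ≠ b → δ < dist a b

/-- Weak convergence of the sets `Λⁿ` to `Λ`: for every `ε, R > 0`, eventually
`Λⁿ ∩ Q_R ⊆ Λ + Q_ε` and `Λ ∩ Q_R ⊆ Λⁿ + Q_ε`. -/
def WeakConv {d : ℕ} (Λn : ℕ → Set (Fin d → ℝ)) (Λ : Set (Fin d → ℝ)) : Prop :=
  ∀ ε > (0 : ℝ), ∀ R > (0 : ℝ), ∃ N : ℕ, ∀ n ≥ N,
    Λn n ∩ cube d R ⊆ Λ + ocube d ε ∧ Λ ∩ cube d R ⊆ Λn n + ocube d ε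

/-- The upper density of `Λ` is at least `c`: for every `ε > 0` there are arbitrarily
large `R` and a cube of side `R` containing at least `(c - ε) R^d` points of `Λ`. -/
def UpperDensGE {d : ℕ} (Λ : Set (Fin d → ℝ)) (c : ℝ) : Prop :=
  ∀ ε > (0 : ℝ), ∀ R₀ : ℝ, ∃ R > R₀, ∃ x : Fin d → ℝ,
    (((Λ ∩ {y | ∀ i, |y i - x i| ≤ R / 2}).ncard : ℝ)) ≥ (c - ε) * R ^ d

/-
Every point of `Λ` is a limit of points of `Λⁿ`, so for a finite `T ⊆ Λ` the sum
`∑_{λ ∈ T} f(x - λ)` is, by continuity of translation in L¹, the L¹-limit of sums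
`∑_{λ ∈ T} f(x - pⱼ λ)` over distinct points `pⱼ λ` of some `Λⁿʲ`. These are at most `1` a.e.:
they are partial sums of the periodization of `f` over `Λⁿʲ`, which converges a.e. because a
uniformly discrete set has boundedly many points in every ball. An a.e. bound passes to the
L¹-limit along an a.e. convergent subsequence and, `Λ` being countable, from all finite `T` to the
full sum over `Λ`.
-/

open Topology Metric Set

theorem Set.Pairwise.countable_of_lt_dist {α : Type*} [PseudoMetricSpace α]
    [TopologicalSpace.SeparableSpace α] {δ : ℝ} (hδ : 0 < δ) {Λ : Set α}
    (hΛ : Λ.Pairwise (δ < dist · ·)) : Λ.Countable :=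
  PairwiseDisjoint.countable_of_isOpen (s := fun x => ball x (δ / 2))
    (fun _ ha _ hb hab => ball_disjoint_ball (by linarith [hΛ ha hb hab]))
    (fun _ _ => isOpen_ball) (fun _ _ => nonempty_ball.2 (half_pos hδ))

theorem Filter.eventually_injOn_of_tendsto {ι α : Type*} [TopologicalSpace α] [T2Space α]
    {l : Filter ι} {T : Finset α} {p : ι → α → α}
    (hp : ∀ a ∈ T, Tendsto (fun j => p j a) l (𝓝 a)) : ∀ᶠ j in l, InjOn (p j) T := by
  have hne : ∀ᶠ j in l, ∀ a ∈ T, ∀ b ∈ T, a ≠ b → p j a ≠ p j b := by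
    simp only [eventually_all_finset]
    intro a ha b hb
    by_cases hab : a = b
    · exact .of_forall fun _ h => (h hab).elim
    · exact (((hp a ha).prodMk_nhds (hp b hb)).eventually
        ((isOpen_ne_fun continuous_fst continuous_snd).mem_nhds hab)).mono fun _ h _ => h
  filter_upwards [hne] with j hj a ha b hb
  exact not_imp_not.1 (hj a ha b hb)

theorem ae_tsum_le_of_forall_finset {α E : Type*} [MeasurableSpace α] {ν : Measure α}
    {Λ : Set E} (hΛ : Λ.Countable) {g : α → E → ℝ} {c : ℝ} (hc : 0 ≤ c)
    (h : ∀ T : Finset E, ↑T ⊆ Λ → ∀ᵐ x ∂ν, ∑ l ∈ T, g x l ≤ c) :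
    ∀ᵐ x ∂ν, ∑' l : Λ, g x l ≤ c := by
  have := hΛ.to_subtype
  have hfin : ∀ᵐ x ∂ν, ∀ s : Finset Λ, ∑ l ∈ s, g x l ≤ c :=
    ae_all_iff.2 fun s => by simpa using h (s.map (Function.Embedding.subtype _)) (by simp)
  filter_upwards [hfin] with x hx using tsum_le_of_sum_le' hc hx

theorem MeasureTheory.TendstoInMeasure.ae_le_of_eventually {α : Type*} [MeasurableSpace α]
    {ν : Measure α} {g : ℕ → α → ℝ} {g' : α → ℝ} {c : ℝ} (hg : TendstoInMeasure ν g atTop g')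
    (h : ∀ᶠ j in atTop, ∀ᵐ x ∂ν, g j x ≤ c) : ∀ᵐ x ∂ν, g' x ≤ c := by
  obtain ⟨ns, hns, hlim⟩ := hg.exists_seq_tendsto_ae
  obtain ⟨J, hJ⟩ := eventually_atTop.1 (hns.tendsto_atTop.eventually h)
  filter_upwards [hlim, ae_all_iff.2 fun i => hJ (i + J) (Nat.le_add_left J i)] with x hx hle
  exact le_of_tendsto' (hx.comp (tendsto_add_atTop_nat J)) hle

section HaarMeasure

variable {E : Type*} [NormedAddCommGroup E]

theorem tsum_indicator_ball_add_eq_encard (Λ : Set E) (r : ℝ) (y : E) :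
    ∑' l : Λ, (ball (0 : E) r).indicator 1 (y + l) = ((Λ ∩ ball (-y) r).encard : ENNReal) := by
  have hmem : ∀ l : E, y + l ∈ ball (0 : E) r ↔ l ∈ ball (-y) r := fun l => by
    rw [mem_ball_zero_iff, mem_ball_iff_norm, sub_neg_eq_add, add_comm]
  rw [← ENNReal.tsum_set_one, tsum_subtype Λ (fun l => (ball (0 : E) r).indicator 1 (y + l)),
    tsum_subtype (Λ ∩ ball (-y) r) fun _ => (1 : ENNReal)]
  congr 1; funext l
  by_cases hl : l ∈ Λ <;> by_cases hb : l ∈ ball (-y) r <;>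
    simp [Set.indicator_of_mem, Set.indicator_of_notMem, hl, hb, hmem]

variable [MeasurableSpace E] [BorelSpace E] {μ : Measure E} [μ.IsAddHaarMeasure]

theorem setLIntegral_comp_sub_eq {s : Set E} (hs : MeasurableSet s)
    (F : E → ENNReal) (l : E) :
    ∫⁻ x in s, F (x - l) ∂μ = ∫⁻ y, s.indicator 1 (y + l) * F y ∂μ := by
  rw [← lintegral_indicator hs, ← lintegral_add_right_eq_self _ l]
  congr 1; funext y
  by_cases hy : y + l ∈ s <;> simp [hy]

theorem encard_inter_ball_mul_le {δ : ℝ} {Λ : Set E} (hΛ : Λ.Pairwise (δ < dist · ·))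
    (c : E) (r : ℝ) :
    (Λ ∩ ball c r).encard * μ (ball 0 (δ / 2)) ≤ μ (ball 0 (r + δ / 2)) := by
  have hdisj : Pairwise (Function.onFun Disjoint fun l : ↥(Λ ∩ ball c r) => ball (l : E) (δ / 2)) :=
    fun a b hab => ball_disjoint_ball (by
      linarith [hΛ a.2.1 b.2.1 (Subtype.coe_injective.ne hab)])
  calc (Λ ∩ ball c r).encard * μ (ball 0 (δ / 2))
      = ∑' l : ↥(Λ ∩ ball c r), μ (ball (l : E) (δ / 2)) := by
        simp only [Measure.addHaar_ball_center, ENNReal.tsum_set_const]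
    _ ≤ μ (⋃ l : ↥(Λ ∩ ball c r), ball (l : E) (δ / 2)) :=
        tsum_meas_le_meas_iUnion_of_disjoint μ (fun _ => measurableSet_ball) hdisj
    _ ≤ μ (ball c (r + δ / 2)) := measure_mono <| iUnion_subset fun l =>
        ball_subset_ball' (by linarith [mem_ball.1 l.2.2, dist_comm (l : E) c])
    _ = μ (ball 0 (r + δ / 2)) := Measure.addHaar_ball_center μ c _

variable [NormedSpace ℝ E] [FiniteDimensional ℝ E]

theorem lintegral_ball_tsum_comp_sub_lt_top {f : E → ℝ} (hfi : Integrable f μ) {δ : ℝ} (hδ : 0 < δ)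
    {Λ : Set E} (hΛ : Λ.Pairwise (δ < dist · ·)) (r : ℝ) :
    ∫⁻ x in ball 0 r, ∑' l : Λ, ENNReal.ofReal (f (x - l)) ∂μ < ⊤ := by
  have := (hΛ.countable_of_lt_dist hδ).to_subtype
  set F : E → ENNReal := fun y => ENNReal.ofReal (f y)
  set C := μ (ball 0 (r + δ / 2)) / μ (ball 0 (δ / 2))
  have hC : C ≠ ⊤ := ENNReal.div_ne_top measure_ball_lt_top.ne
    (measure_ball_pos μ _ (half_pos hδ)).ne'
  have hF : AEMeasurable F μ := hfi.aemeasurable.ennreal_ofReal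
  have hcount : ∀ y, ∑' l : Λ, (ball (0 : E) r).indicator 1 (y + l) ≤ C := fun y => by
    rw [tsum_indicator_ball_add_eq_encard, ENNReal.le_div_iff_mul_le
      (Or.inl (measure_ball_pos μ _ (half_pos hδ)).ne') (Or.inl measure_ball_lt_top.ne)]
    exact encard_inter_ball_mul_le hΛ _ _
  calc ∫⁻ x in ball 0 r, ∑' l : Λ, F (x - l) ∂μ
      = ∑' l : Λ, ∫⁻ y, (ball (0 : E) r).indicator 1 (y + l) * F y ∂μ := by
        rw [lintegral_tsum fun l => (hfi.comp_sub_right _).aemeasurable.ennreal_ofReal.restrict]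
        exact tsum_congr fun l => setLIntegral_comp_sub_eq measurableSet_ball F l
    _ = ∫⁻ y, (∑' l : Λ, (ball (0 : E) r).indicator 1 (y + l)) * F y ∂μ := by
        have hm : ∀ l : Λ, AEMeasurable
            (fun y => (ball (0 : E) r).indicator 1 (y + l) * F y) μ :=
          fun l => ((measurable_one.indicator measurableSet_ball).comp
            (measurable_add_const _)).aemeasurable.mul hF
        rw [← lintegral_tsum hm]
        simp_rw [ENNReal.tsum_mul_right]
    _ ≤ ∫⁻ y, C * F y ∂μ := lintegral_mono fun y => mul_le_mul_left (hcount y) _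
    _ < ⊤ := by
        rw [lintegral_const_mul' _ _ hC]
        exact ENNReal.mul_lt_top hC.lt_top hfi.lintegral_lt_top

theorem ae_summable_comp_sub {f : E → ℝ} (hf0 : ∀ x, 0 ≤ f x) (hfi : Integrable f μ) {δ : ℝ}
    (hδ : 0 < δ) {Λ : Set E} (hΛ : Λ.Pairwise (δ < dist · ·)) :
    ∀ᵐ x ∂μ, Summable fun l : Λ => f (x - l) := by
  have := (hΛ.countable_of_lt_dist hδ).to_subtype
  suffices ∀ᵐ x ∂μ, ∑' l : Λ, ENNReal.ofReal (f (x - l)) < ⊤ by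
    filter_upwards [this] with x hx
    simpa only [ENNReal.toReal_ofReal (hf0 _)] using ENNReal.summable_toReal hx.ne
  rw [← Measure.restrict_univ (μ := μ), ← iUnion_ball_nat 0, ae_restrict_iUnion_iff]
  exact fun n => ae_lt_top'
    (AEMeasurable.tsum fun l => (hfi.comp_sub_right _).aemeasurable.ennreal_ofReal.restrict)
    (lintegral_ball_tsum_comp_sub_lt_top hfi hδ hΛ n).ne

theorem ae_sum_comp_sub_le_of_tendsto {f : E → ℝ} (hf : Integrable f μ) {T : Finset E}
    {p : ℕ → E → E} (hp : ∀ l ∈ T, Tendsto (fun j => p j l) atTop (𝓝 l)) {c : ℝ}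
    (h : ∀ᶠ j in atTop, ∀ᵐ x ∂μ, ∑ l ∈ T, f (x - p j l) ≤ c) :
    ∀ᵐ x ∂μ, ∑ l ∈ T, f (x - l) ≤ c := by
  have : Fact ((1 : ENNReal) ≠ ⊤) := ⟨ENNReal.one_ne_top⟩
  let τ : E → Lp ℝ 1 μ := fun t => DomAddAct.mk (-t) +ᵥ hf.toL1 f
  have hτ_cont : Continuous τ :=
    (DomAddAct.continuous_mk.comp continuous_neg).vadd continuous_const
  have hτ : ∀ t, τ t =ᵐ[μ] fun x => f (x - t) := fun t => by
    refine (DomAddAct.vadd_Lp_ae_eq _ _).trans ?_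
    simpa [Function.comp_def, neg_add_eq_sub] using
      (measurePreserving_vadd (-t) μ).quasiMeasurePreserving.ae_eq_comp hf.coeFn_toL1
  have hsum : ∀ q : E → E, ⇑(∑ l ∈ T, τ (q l)) =ᵐ[μ] fun x => ∑ l ∈ T, f (x - q l) := fun q => by
    refine (Lp.coeFn_finsetSum T _).trans ?_
    convert eventuallyEq_sum (s := T) fun l _ => hτ (q l) using 1
    ext x; simp only [Finset.sum_apply]
  have hconv : Tendsto (fun j => ∑ l ∈ T, τ (p j l)) atTop (𝓝 (∑ l ∈ T, τ l)) :=
    tendsto_finsetSum T fun l hl => (hτ_cont.tendsto l).comp (hp l hl)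
  have hmeas := (tendstoInMeasure_of_tendsto_Lp hconv).congr (fun j => hsum (p j)) (hsum id)
  exact hmeas.ae_le_of_eventually h

end HaarMeasure

section PackingSets

variable {d : ℕ}

theorem IsPacking.ae_sum_le_one {f : (Fin d → ℝ) → ℝ} {Λ : Set (Fin d → ℝ)}
    (hpack : IsPacking f Λ) (hsum : ∀ᵐ x, Summable fun l : Λ => f (x - l)) (hf0 : ∀ x, 0 ≤ f x) :
    ∀ᵐ x, ∀ T : Finset (Fin d → ℝ), ↑T ⊆ Λ → ∑ l ∈ T, f (x - l) ≤ 1 := by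
  classical
  filter_upwards [hpack, hsum] with x hx hs T hT
  calc ∑ l ∈ T, f (x - l) = ∑ l ∈ T.subtype (· ∈ Λ), f (x - l) :=
        (Finset.sum_subtype_of_mem (fun l => f (x - l)) fun _ hl => hT hl).symm
    _ ≤ ∑' l : Λ, f (x - l) := hs.sum_le_tsum _ fun _ _ => hf0 _
    _ ≤ 1 := hx

theorem WeakConv.exists_dist_lt {Λn : ℕ → Set (Fin d → ℝ)} {Λ : Set (Fin d → ℝ)}
    (hconv : WeakConv Λn Λ) {T : Finset (Fin d → ℝ)} (hT : ↑T ⊆ Λ) {ε : ℝ} (hε : 0 < ε) :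
    ∃ N, ∃ q : (Fin d → ℝ) → Fin d → ℝ, ∀ l ∈ T, q l ∈ Λn N ∧ dist (q l) l < ε := by
  obtain ⟨r, hr, hTr⟩ := T.finite_toSet.isBounded.subset_closedBall_lt 0 0
  obtain ⟨N, hN⟩ := hconv ε hε (2 * r) (by positivity)
  have hcube : ∀ l ∈ T, l ∈ Λ ∩ cube d (2 * r) := fun l hl =>
    ⟨hT hl, fun i => by
      simpa [← Real.norm_eq_abs] using
        (norm_le_pi_norm l i).trans (mem_closedBall_zero_iff.1 (hTr hl))⟩
  have hq : ∀ l ∈ T, ∃ q ∈ Λn N, dist q l < ε := fun l hl => by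
    obtain ⟨q, hq, w, hw, rfl⟩ := (hN N le_rfl).2 (hcube l hl)
    refine ⟨q, hq, ?_⟩
    rw [dist_self_add_right, pi_norm_lt_iff hε]
    exact fun i => (Real.norm_eq_abs _).trans_lt ((hw i).trans (half_lt_self hε))
  choose! q hq using hq
  exact ⟨N, q, hq⟩

theorem WeakConv.exists_tendsto {Λn : ℕ → Set (Fin d → ℝ)} {Λ : Set (Fin d → ℝ)}
    (hconv : WeakConv Λn Λ) {T : Finset (Fin d → ℝ)} (hT : ↑T ⊆ Λ) :
    ∃ N : ℕ → ℕ, ∃ p : ℕ → (Fin d → ℝ) → Fin d → ℝ, (∀ j, MapsTo (p j) T (Λn (N j))) ∧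
      ∀ l ∈ T, Tendsto (fun j => p j l) atTop (𝓝 l) := by
  choose N p hp using fun j : ℕ => hconv.exists_dist_lt hT (Nat.one_div_pos_of_nat (n := j))
  refine ⟨N, p, fun j l hl => (hp j l hl).1, fun l hl => tendsto_iff_dist_tendsto_zero.2 ?_⟩
  exact squeeze_zero (fun _ => dist_nonneg) (fun j => (hp j l hl).2.le)
    tendsto_one_div_add_atTop_nhds_zero_nat

end PackingSets

theorem packing_of_weak_limit {d : ℕ} (f : (Fin d → ℝ) → ℝ)
    (hf0 : ∀ x, 0 ≤ f x) (hfi : Integrable f)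
    (Λn : ℕ → Set (Fin d → ℝ)) (Λ : Set (Fin d → ℝ)) (δ : ℝ) (hδ : 0 < δ)
    (hsepn : ∀ n, Separated δ (Λn n)) (hsep : Separated δ Λ)
    (hpack : ∀ n, IsPacking f (Λn n)) (hconv : WeakConv Λn Λ) :
    IsPacking f Λ := by
  refine ae_tsum_le_of_forall_finset (g := fun x l => f (x - l))
    (Set.Pairwise.countable_of_lt_dist hδ hsep) zero_le_one fun T hT => ?_
  obtain ⟨N, p, hpΛn, hp⟩ := hconv.exists_tendsto hT
  refine ae_sum_comp_sub_le_of_tendsto hfi hp ?_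
  filter_upwards [eventually_injOn_of_tendsto hp] with j hinj
  filter_upwards [(hpack (N j)).ae_sum_le_one (ae_summable_comp_sub hf0 hfi hδ (hsepn (N j))) hf0]
    with x hx
  classical
  rw [← Finset.sum_image (f := fun q => f (x - q)) hinj]
  exact hx _ (by simpa using (hpΛn j).image_subset)
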